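/- Let λ, μ, ω be real constants with μ > 0, λ + 2μ > 0, ω > 0, and set k_p := ω/√(λ+2μ), k_s := ω/√μ. For y, z ∈ ℝ³ with y ≠ z, define the 3×3 Green tensors G_p(y,z) with entries (G_p)_{ij} = −(1/(μk_s²)) ∂_{y_i}∂_{y_j} Φ_{k_p}(y,z) and G_s(y,z) with entries (G_s)_{ij} = (1/μ)(Φ_{k_s}(y,z)δ_{ij} + (1/k_s²) ∂_{y_i}∂_{y_j} Φ_{k_s}(y,z)), where Φ_k(y,z) := e^{ik|y−z|}/(4π|y−z|). Then the imaginary parts of their traces are given by Im{tr(G_p(y,z))} = (1/(λ+2μ)) · sin(k_p|y−z|)/(4π|y−z|) and Im{tr(G_s(y,z))} = (2/μ) · sin(k_s|y−z|)/(4π|y−z|). -/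

import Mathlib

/-!
Both traces are multiples of the Laplacian of `Φ_k`: `tr G_p = -(μ k_s²)⁻¹ ΔΦ_{k_p}` and
`tr G_s = μ⁻¹ (3 Φ_{k_s} + k_s⁻² ΔΦ_{k_s})`. Off the source `Φ_k` solves the Helmholtz equation
`ΔΦ_k = -k² Φ_k`, which follows from the radial Laplacian `Δ f(r) = f''(r) + (n - 1) f'(r) / r`
applied to `f(r) = e^{ikr}/(4πr)`. Hence `tr G_p = Φ_{k_p}/(λ + 2μ)` and `tr G_s = 2 Φ_{k_s}/μ`, and
`Im Φ_k = sin(kr)/(4πr)`.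
-/

/-- Partial derivative ∂_i of a complex-valued function on ℝ³. -/
noncomputable def pd (i : Fin 3) (f : EuclideanSpace ℝ (Fin 3) → ℂ) :
    EuclideanSpace ℝ (Fin 3) → ℂ :=
  fun x => fderiv ℝ f x (EuclideanSpace.single i 1)

/-- Second partial derivative ∂_i ∂_j. -/
noncomputable def pd2 (i j : Fin 3) (f : EuclideanSpace ℝ (Fin 3) → ℂ) :
    EuclideanSpace ℝ (Fin 3) → ℂ :=
  pd i (pd j f)

/-- Fundamental solution of the 3D Helmholtz equation with wave number `k` and source `z`. -/
noncomputable def Phi (k : ℝ) (z x : EuclideanSpace ℝ (Fin 3)) : ℂ :=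
  Complex.exp (Complex.I * (k : ℂ) * (‖x - z‖ : ℝ)) / ((4 * Real.pi * ‖x - z‖ : ℝ) : ℂ)

open scoped RealInnerProductSpace

section Radial

variable {E : Type*} [NormedAddCommGroup E] [InnerProductSpace ℝ E]

theorem hasFDerivAt_norm_sub {x z : E} (h : x ≠ z) :
    HasFDerivAt (fun x => ‖x - z‖) (‖x - z‖⁻¹ • innerSL ℝ (x - z)) x := by
  have hsq : HasFDerivAt (fun x => ‖x - z‖ ^ 2) (2 • innerSL ℝ (x - z)) x := by
    simpa using ((hasFDerivAt_id x).sub_const z).norm_sq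
  have hsqrt := hsq.sqrt (by simpa [sub_eq_zero] using h)
  simp only [Real.sqrt_sq (norm_nonneg _)] at hsqrt
  convert hsqrt using 1
  match_scalars
  field_simp

theorem fderiv_radial_apply {f : ℝ → ℂ} {f' : ℂ} {x z : E} (h : x ≠ z)
    (hf : HasDerivAt f f' ‖x - z‖) (v : E) :
    fderiv ℝ (fun x => f ‖x - z‖) x v = (⟪x - z, v⟫ : ℂ) * (f' / ‖x - z‖) := by
  have hF : HasFDerivAt (fun x => f ‖x - z‖) _ x := hf.hasFDerivAt.comp x (hasFDerivAt_norm_sub h)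
  rw [hF.fderiv]
  simp only [ContinuousLinearMap.comp_apply, smul_apply, innerSL_apply_apply,
    ContinuousLinearMap.toSpanSingleton_apply, smul_eq_mul, Complex.real_smul, Complex.ofReal_mul,
    Complex.ofReal_inv]
  ring

theorem fderiv_fderiv_radial_apply {f f' : ℝ → ℂ} {f'' : ℂ} {y z : E} (h : y ≠ z)
    (hf : ∀ t, 0 < t → HasDerivAt f (f' t) t) (hf' : HasDerivAt f' f'' ‖y - z‖) (v : E) :
    fderiv ℝ (fun x => fderiv ℝ (fun x => f ‖x - z‖) x v) y v =
      ((⟪y - z, v⟫ / ‖y - z‖) ^ 2 : ℝ) * f''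
        + ((‖v‖ ^ 2 - (⟪y - z, v⟫ / ‖y - z‖) ^ 2) / ‖y - z‖ : ℝ) * f' ‖y - z‖ := by
  have hr : 0 < ‖y - z‖ := norm_pos_iff.mpr (sub_ne_zero.mpr h)
  have hlocal : (fun x => fderiv ℝ (fun x => f ‖x - z‖) x v) =ᶠ[nhds y]
      fun x => (⟪x - z, v⟫ : ℂ) * (f' ‖x - z‖ / ‖x - z‖) := by
    filter_upwards [isOpen_ne.mem_nhds h] with x hx
    exact fderiv_radial_apply hx (hf _ (norm_pos_iff.mpr (sub_ne_zero.mpr hx))) v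
  have hinner : HasFDerivAt (fun x => (⟪x - z, v⟫ : ℂ)) _ y :=
    Complex.ofRealCLM.hasFDerivAt.comp y (((hasFDerivAt_id y).sub_const z).inner ℝ
      (hasFDerivAt_const v y))
  have hquot : HasDerivAt (fun t : ℝ => f' t / t)
      ((f'' * ‖y - z‖ - f' ‖y - z‖ * 1) / (‖y - z‖ : ℂ) ^ 2) ‖y - z‖ :=
    hf'.div (hasDerivAt_id' _).ofReal_comp (by exact_mod_cast hr.ne')
  have hrad : HasFDerivAt (fun x => f' ‖x - z‖ / ‖x - z‖) _ y :=
    HasFDerivAt.comp (g := fun t : ℝ => f' t / t) y hquot.hasFDerivAt (hasFDerivAt_norm_sub h)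
  have hprod : HasFDerivAt (fun x => (⟪x - z, v⟫ : ℂ) * (f' ‖x - z‖ / ‖x - z‖)) _ y :=
    hinner.mul hrad
  rw [hlocal.fderiv_eq, hprod.fderiv]
  have hr' : (‖y - z‖ : ℂ) ≠ 0 := by exact_mod_cast hr.ne'
  simp only [add_apply, smul_apply, zero_apply, ContinuousLinearMap.comp_apply,
    ContinuousLinearMap.toSpanSingleton_apply, ContinuousLinearMap.prod_apply,
    ContinuousLinearMap.id_apply, innerSL_apply_apply, fderivInnerCLM_apply, inner_zero_right,
    real_inner_self_eq_norm_sq, Complex.ofRealCLM_apply, Complex.real_smul, smul_eq_mul]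
  push_cast
  field_simp
  ring

theorem OrthonormalBasis.sum_fderiv_fderiv_radial {ι : Type*} [Fintype ι]
    (b : OrthonormalBasis ι ℝ E) {f f' : ℝ → ℂ} {f'' : ℂ} {y z : E} (h : y ≠ z)
    (hf : ∀ t, 0 < t → HasDerivAt f (f' t) t) (hf' : HasDerivAt f' f'' ‖y - z‖) :
    ∑ i, fderiv ℝ (fun x => fderiv ℝ (fun x => f ‖x - z‖) x (b i)) y (b i) =
      f'' + ((Fintype.card ι - 1) / ‖y - z‖ : ℝ) * f' ‖y - z‖ := by
  have hr : ‖y - z‖ ≠ 0 := norm_ne_zero_iff.mpr (sub_ne_zero.mpr h)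
  have hdir : ∑ i, (⟪y - z, b i⟫ / ‖y - z‖) ^ 2 = 1 := by
    simp_rw [div_pow, ← Finset.sum_div, b.sum_sq_inner_left, div_self (pow_ne_zero 2 hr)]
  simp_rw [fderiv_fderiv_radial_apply h hf hf', Finset.sum_add_distrib, ← Finset.sum_mul,
    ← Complex.ofReal_sum, ← Finset.sum_div, Finset.sum_sub_distrib, hdir, b.orthonormal.1]
  simp

end Radial

section Helmholtz

open Complex

noncomputable def phiRadial (k t : ℝ) : ℂ := exp (I * k * t) / ((4 * Real.pi * t : ℝ) : ℂ)

noncomputable def phiRadialDeriv (k t : ℝ) : ℂ :=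
  (I * k * t - 1) * exp (I * k * t) / ((4 * Real.pi * t ^ 2 : ℝ) : ℂ)

noncomputable def phiRadialDeriv2 (k t : ℝ) : ℂ :=
  (-(k : ℂ) ^ 2 * t ^ 2 - 2 * I * k * t + 2) * exp (I * k * t) / ((4 * Real.pi * t ^ 3 : ℝ) : ℂ)

theorem Phi_eq_phiRadial (k : ℝ) (z x : EuclideanSpace ℝ (Fin 3)) :
    Phi k z x = phiRadial k ‖x - z‖ := rfl

theorem hasDerivAt_exp_I_mul (k t : ℝ) :
    HasDerivAt (fun t : ℝ => exp (I * k * t)) (I * k * exp (I * k * t)) t := by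
  simpa [mul_comm] using ((hasDerivAt_id' t).ofReal_comp.const_mul (I * k)).cexp

theorem hasDerivAt_phiRadial (k : ℝ) {t : ℝ} (ht : t ≠ 0) :
    HasDerivAt (phiRadial k) (phiRadialDeriv k t) t := by
  have hden : HasDerivAt (fun t : ℝ => ((4 * Real.pi * t : ℝ) : ℂ)) (4 * Real.pi) t := by
    simpa using ((hasDerivAt_id' t).const_mul (4 * Real.pi)).ofReal_comp
  refine ((hasDerivAt_exp_I_mul k t).div hden (by simp [Real.pi_ne_zero, ht])).congr_deriv ?_
  rw [phiRadialDeriv]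
  push_cast
  field_simp

theorem hasDerivAt_phiRadialDeriv (k : ℝ) {t : ℝ} (ht : t ≠ 0) :
    HasDerivAt (phiRadialDeriv k) (phiRadialDeriv2 k t) t := by
  have hnum : HasDerivAt (fun t : ℝ => (I * k * t - 1) * exp (I * k * t))
      (I * k * exp (I * k * t) + (I * k * t - 1) * (I * k * exp (I * k * t))) t := by
    have hlin : HasDerivAt (fun t : ℝ => I * k * t - 1) (I * k) t := by
      simpa using ((hasDerivAt_id' t).ofReal_comp.const_mul (I * k)).sub_const 1
    exact hlin.mul (hasDerivAt_exp_I_mul k t)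
  have hden : HasDerivAt (fun t : ℝ => ((4 * Real.pi * t ^ 2 : ℝ) : ℂ)) (8 * Real.pi * t) t := by
    convert ((hasDerivAt_pow 2 t).const_mul (4 * Real.pi)).ofReal_comp using 1
    push_cast
    ring
  refine (hnum.div hden (by simp [Real.pi_ne_zero, ht])).congr_deriv ?_
  rw [phiRadialDeriv2]
  push_cast
  field_simp
  ring_nf
  simp only [I_sq]
  ring

theorem phiRadial_helmholtz (k : ℝ) {t : ℝ} (ht : t ≠ 0) :
    phiRadialDeriv2 k t + 2 / (t : ℂ) * phiRadialDeriv k t = -(k : ℂ) ^ 2 * phiRadial k t := by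
  have : (t : ℂ) ≠ 0 := by exact_mod_cast ht
  have : (Real.pi : ℂ) ≠ 0 := by exact_mod_cast Real.pi_ne_zero
  simp only [phiRadial, phiRadialDeriv, phiRadialDeriv2]
  push_cast
  field_simp
  ring

theorem sum_pd2_Phi (k : ℝ) {y z : EuclideanSpace ℝ (Fin 3)} (h : y ≠ z) :
    ∑ i, pd2 i i (fun x => Phi k z x) y = -(k : ℂ) ^ 2 * Phi k z y := by
  have hr : ‖y - z‖ ≠ 0 := norm_ne_zero_iff.mpr (sub_ne_zero.mpr h)
  have hlap := (EuclideanSpace.basisFun (Fin 3) ℝ).sum_fderiv_fderiv_radial h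
    (fun t ht => hasDerivAt_phiRadial k ht.ne') (hasDerivAt_phiRadialDeriv k hr)
  simp only [EuclideanSpace.basisFun_apply, Fintype.card_fin] at hlap
  norm_num at hlap
  rw [Phi_eq_phiRadial, ← phiRadial_helmholtz k hr]
  exact hlap

theorem im_Phi (k : ℝ) (z x : EuclideanSpace ℝ (Fin 3)) :
    (Phi k z x).im = Real.sin (k * ‖x - z‖) / (4 * Real.pi * ‖x - z‖) := by
  rw [Phi, div_ofReal_im, show I * k * ‖x - z‖ = ((k * ‖x - z‖ : ℝ) : ℂ) * I by push_cast; ring,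
    exp_ofReal_mul_I_im]

end Helmholtz

/-- Imaginary parts of the traces of the compressional and shear Green tensors:
`Im tr G_p(y,z) = sin(k_p|y−z|)/((λ+2μ)·4π|y−z|)` and
`Im tr G_s(y,z) = 2sin(k_s|y−z|)/(μ·4π|y−z|)`. -/
theorem im_trace_green_tensors
    (lam mu om : ℝ) (hmu : 0 < mu) (hlm : 0 < lam + 2 * mu) (hom : 0 < om)
    (kp ks : ℝ) (hkp : kp = om / Real.sqrt (lam + 2 * mu)) (hks : ks = om / Real.sqrt mu)
    (y z : EuclideanSpace ℝ (Fin 3)) (hyz : y ≠ z)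
    (Gp Gs : Matrix (Fin 3) (Fin 3) ℂ)
    (hGp : ∀ i j : Fin 3, Gp i j =
      -((1 / (mu * ks ^ 2) : ℝ) : ℂ) * pd2 i j (fun y' => Phi kp z y') y)
    (hGs : ∀ i j : Fin 3, Gs i j =
      ((1 / mu : ℝ) : ℂ) * (Phi ks z y * (if i = j then 1 else 0)
        + ((1 / ks ^ 2 : ℝ) : ℂ) * pd2 i j (fun y' => Phi ks z y') y)) :
    Gp.trace.im = (1 / (lam + 2 * mu)) * (Real.sin (kp * ‖y - z‖) / (4 * Real.pi * ‖y - z‖)) ∧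
    Gs.trace.im = (2 / mu) * (Real.sin (ks * ‖y - z‖) / (4 * Real.pi * ‖y - z‖)) := by
  have hks0 : (ks : ℂ) ≠ 0 := by
    rw [hks]
    exact_mod_cast div_ne_zero hom.ne' (Real.sqrt_pos.mpr hmu).ne'
  have htrace_p : Gp.trace = ((kp ^ 2 / (mu * ks ^ 2) : ℝ) : ℂ) * Phi kp z y := by
    simp only [Matrix.trace, Matrix.diag_apply, hGp, ← Finset.mul_sum, sum_pd2_Phi kp hyz]
    push_cast
    ring
  have htrace_s : Gs.trace = ((2 / mu : ℝ) : ℂ) * Phi ks z y := by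
    simp only [Matrix.trace, Matrix.diag_apply, hGs, ← Finset.mul_sum,
      Finset.sum_add_distrib, Finset.sum_const, Finset.card_fin, sum_pd2_Phi ks hyz]
    push_cast
    field_simp
    ring
  have hcoef : kp ^ 2 / (mu * ks ^ 2) = 1 / (lam + 2 * mu) := by
    rw [hkp, hks, div_pow, div_pow, Real.sq_sqrt hlm.le, Real.sq_sqrt hmu.le]
    field_simp
  rw [htrace_p, htrace_s, Complex.im_ofReal_mul, Complex.im_ofReal_mul, im_Phi, im_Phi, hcoef]
  exact ⟨rfl, rfl⟩
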